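/- (Banach–Mazur unfolding) Let A ⊆ ωω and B ⊆ ωω × ωω with A = π₁[B] the projection of B. If Player 2 has a winning strategy in the unfolded Banach–Mazur game G*_{A,B}, then Player 2 has a winning strategy in the Banach–Mazur game G*_A; if Player 1 wins G*_{A,B}, then Player 1 wins G*_A. -/

import Mathlib

/-- Position after `n` moves in a game with string moves, players using `σ`, `τ`. -/
def bmRun (σ τ : List (List ℕ) → List ℕ) : ℕ → List (List ℕ)
  | 0 => []
  | n + 1 => bmRun σ τ n ++
      [if n % 2 = 0 then σ (bmRun σ τ n) else τ (bmRun σ τ n)]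

/-- The `n`-th string played. -/
def bmMove (σ τ : List (List ℕ) → List ℕ) (n : ℕ) : List ℕ :=
  if n % 2 = 0 then σ (bmRun σ τ n) else τ (bmRun σ τ n)

/-- The real obtained by concatenating all the strings played. -/
def bmLimit (σ τ : List (List ℕ) → List ℕ) (k : ℕ) : ℕ :=
  (((List.range (k + 1)).map (bmMove σ τ)).flatten).getD k 0

/-- Player 2 has a winning strategy in the Banach–Mazur game `G*_A`. -/
def P2WinsBM (A : Set (ℕ → ℕ)) : Prop :=
  ∃ τ, (∀ p, τ p ≠ []) ∧ ∀ σ, (∀ p, σ p ≠ []) → bmLimit σ τ ∈ A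

/-- Player 1 has a winning strategy in the Banach–Mazur game `G*_A`. -/
def P1WinsBM (A : Set (ℕ → ℕ)) : Prop :=
  ∃ σ, (∀ p, σ p ≠ []) ∧ ∀ τ, (∀ p, τ p ≠ []) → bmLimit σ τ ∉ A

/-- Position after `n` moves in the unfolded game (each move is a string
together with an auxiliary natural number; only Player 2's numbers matter). -/
def bmRunU (σ τ : List (List ℕ × ℕ) → List ℕ × ℕ) : ℕ → List (List ℕ × ℕ)
  | 0 => []
  | n + 1 => bmRunU σ τ n ++
      [if n % 2 = 0 then σ (bmRunU σ τ n) else τ (bmRunU σ τ n)]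

/-- The `n`-th move in the unfolded game. -/
def bmMoveU (σ τ : List (List ℕ × ℕ) → List ℕ × ℕ) (n : ℕ) : List ℕ × ℕ :=
  if n % 2 = 0 then σ (bmRunU σ τ n) else τ (bmRunU σ τ n)

/-- The real obtained by concatenating the strings played in the unfolded game. -/
def bmLimitU (σ τ : List (List ℕ × ℕ) → List ℕ × ℕ) (k : ℕ) : ℕ :=
  (((List.range (k + 1)).map fun n => (bmMoveU σ τ n).1).flatten).getD k 0

/-- The auxiliary real produced by Player 2's extra moves in the unfolded game. -/
def bmAuxU (σ τ : List (List ℕ × ℕ) → List ℕ × ℕ) (n : ℕ) : ℕ :=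
  (bmMoveU σ τ (2 * n + 1)).2

/-- Player 2 has a winning strategy in the unfolded Banach–Mazur game `G*_{A,B}`. -/
def P2WinsBMU (A : Set (ℕ → ℕ)) (B : Set ((ℕ → ℕ) × (ℕ → ℕ))) : Prop :=
  ∃ τ, (∀ p, (τ p).1 ≠ []) ∧ ∀ σ, (∀ p, (σ p).1 ≠ []) →
    bmLimitU σ τ ∈ A ∧ (bmLimitU σ τ, bmAuxU σ τ) ∈ B

/-- Player 1 has a winning strategy in the unfolded Banach–Mazur game `G*_{A,B}`. -/
def P1WinsBMU (A : Set (ℕ → ℕ)) (B : Set ((ℕ → ℕ) × (ℕ → ℕ))) : Prop :=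
  ∃ σ, (∀ p, (σ p).1 ≠ []) ∧ ∀ τ, (∀ p, (τ p).1 ≠ []) →
    ¬(bmLimitU σ τ ∈ A ∧ (bmLimitU σ τ, bmAuxU σ τ) ∈ B)

/-!
Player 2: the game `G*_A` only sees the strings, so a winning strategy in the unfolded game still
wins once its auxiliary numbers are forgotten.

Player 1: from a winning strategy `σu` in the unfolded game, Player 1 runs simulated plays of
`σu` against every finite sequence of auxiliary numbers, dovetailed through `Nat.pair`; since
moves are nonempty strings, Player 2's move in a simulated play can absorb all real moves made
since that play was last advanced. If the real outcome `x` were in `A`, a witness `y` with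
`(x, y) ∈ B` would pick out a chain of simulated plays forming one play of the unfolded game
consistent with `σu` and with outcome `(x, y)`, contradicting that `σu` wins.
-/

namespace Alternating

variable {α β : Type*}

def run (f g : List α → α) : ℕ → List α
  | 0 => []
  | n + 1 => run f g n ++ [if n % 2 = 0 then f (run f g n) else g (run f g n)]

def move (f g : List α → α) (n : ℕ) : α :=
  if n % 2 = 0 then f (run f g n) else g (run f g n)

section Run

variable (f g : List α → α)

theorem run_succ (n : ℕ) : run f g (n + 1) = run f g n ++ [move f g n] := rfl

theorem move_of_even {n : ℕ} (h : n % 2 = 0) : move f g n = f (run f g n) := if_pos h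

theorem move_of_odd {n : ℕ} (h : n % 2 = 1) : move f g n = g (run f g n) := if_neg (by omega)

theorem move_mem {s : Set α} (hf : ∀ p, f p ∈ s) (hg : ∀ p, g p ∈ s) (n : ℕ) :
    move f g n ∈ s := by
  unfold move
  split_ifs
  exacts [hf _, hg _]

theorem run_eq_map_range (n : ℕ) : run f g n = (List.range n).map (move f g) := by
  induction n with
  | zero => rfl
  | succ n ih => rw [run_succ, ih, List.range_succ, List.map_append, List.map_singleton]

theorem length_run (n : ℕ) : (run f g n).length = n := by
  simp [run_eq_map_range]

theorem take_run {m n : ℕ} (h : m ≤ n) : (run f g n).take m = run f g m := by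
  simp [run_eq_map_range, ← List.map_take, List.take_range, h]

theorem getElem_run {i n : ℕ} (h : i < (run f g n).length) : (run f g n)[i] = move f g i := by
  simp [run_eq_map_range]

theorem run_prefix_run {m n : ℕ} (h : m ≤ n) : run f g m <+: run f g n :=
  take_run f g h ▸ List.take_prefix m _

variable {f g} {π : α → List β}

theorem le_length_flatten_map_run (hne : ∀ n, π (move f g n) ≠ []) (n : ℕ) :
    n ≤ ((run f g n).map π).flatten.length := by
  induction n with
  | zero => exact Nat.zero_le _
  | succ n ih =>
    have hpos := List.length_pos_iff.2 (hne n)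
    simp only [run_succ, List.map_append, List.flatten_append, List.length_append,
      List.map_singleton, List.flatten_singleton]
    omega

theorem getD_flatten_map_run (hne : ∀ n, π (move f g n) ≠ []) {k M : ℕ} (hk : k < M) (d : β) :
    ((run f g M).map π).flatten.getD k d = ((run f g (k + 1)).map π).flatten.getD k d := by
  obtain ⟨t, ht⟩ := ((run_prefix_run f g hk).map π).flatten
  rw [← ht, List.getD_append _ _ _ _ (le_length_flatten_map_run hne (k + 1))]

end Run

def annotate (e : List β → α → β) (p : List α) : List β :=
  p.foldl (fun q a => q ++ [e q a]) []

theorem annotate_append_singleton (e : List β → α → β) (p : List α) (a : α) :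
    annotate e (p ++ [a]) = annotate e p ++ [e (annotate e p) a] := by
  simp [annotate, List.foldl_append]

theorem map_annotate {e : List β → α → β} {φ : β → α} (he : ∀ q a, φ (e q a) = a)
    (p : List α) : (annotate e p).map φ = p := by
  induction p using List.reverseRecOn with
  | nil => rfl
  | append_singleton p a ih => simp [annotate_append_singleton, ih, he]

theorem run_eq_annotate {f g : List α → α} {f' g' : List β → β} {e : List β → α → β}
    (hf : ∀ p, f' (annotate e p) = e (annotate e p) (f p))
    (hg : ∀ p, g' (annotate e p) = e (annotate e p) (g p)) (n : ℕ) :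
    run f' g' n = annotate e (run f g n) := by
  induction n with
  | zero => rfl
  | succ n ih =>
    rw [run_succ, run_succ, annotate_append_singleton, ← ih]
    unfold move
    split_ifs
    · rw [ih, hf]
    · rw [ih, hg]

end Alternating

open Alternating

theorem bmRun_eq_run (σ τ : List (List ℕ) → List ℕ) : bmRun σ τ = run σ τ := by
  funext n
  induction n with
  | zero => rfl
  | succ n ih => rw [bmRun, ih]; rfl

theorem bmLimit_eq_getD (σ τ : List (List ℕ) → List ℕ) (k : ℕ) :
    bmLimit σ τ k = (run σ τ (k + 1)).flatten.getD k 0 := by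
  have hmove : bmMove σ τ = move σ τ := by
    funext n
    rw [bmMove, move, bmRun_eq_run]
  rw [bmLimit, run_eq_map_range, hmove]

theorem bmRunU_eq_run (σ τ : List (List ℕ × ℕ) → List ℕ × ℕ) : bmRunU σ τ = run σ τ := by
  funext n
  induction n with
  | zero => rfl
  | succ n ih => rw [bmRunU, ih]; rfl

theorem bmMoveU_eq_move (σ τ : List (List ℕ × ℕ) → List ℕ × ℕ) : bmMoveU σ τ = move σ τ := by
  funext n
  rw [bmMoveU, move, bmRunU_eq_run]

theorem bmLimitU_eq_getD (σ τ : List (List ℕ × ℕ) → List ℕ × ℕ) (k : ℕ) :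
    bmLimitU σ τ k = ((run σ τ (k + 1)).map Prod.fst).flatten.getD k 0 := by
  rw [bmLimitU, run_eq_map_range, bmMoveU_eq_move, List.map_map]
  rfl

theorem p2WinsBM_of_p2WinsBMU {A : Set (ℕ → ℕ)} {B : Set ((ℕ → ℕ) × (ℕ → ℕ))}
    (h : P2WinsBMU A B) : P2WinsBM A := by
  obtain ⟨τu, hτu, hwin⟩ := h
  -- Player 1's auxiliary numbers are never read; letting Player 1 copy the number `τu` would
  -- play makes both players' moves extend a position in the same way.
  let e : List (List ℕ × ℕ) → List ℕ → List ℕ × ℕ := fun q s => (s, (τu q).2)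
  let τ : List (List ℕ) → List ℕ := fun p => (τu (annotate e p)).1
  refine ⟨τ, fun p => hτu _, fun σ hσ => ?_⟩
  let σu : List (List ℕ × ℕ) → List ℕ × ℕ := fun q => (σ (q.map Prod.fst), (τu q).2)
  have hrun : ∀ n, (run σu τu n).map Prod.fst = run σ τ n := by
    intro n
    rw [run_eq_annotate (f := σ) (g := τ) (e := e) (fun p => by simp [σu, e, map_annotate])
      (fun p => rfl), map_annotate fun _ _ => rfl]
  have hlim : bmLimitU σu τu = bmLimit σ τ := by
    funext k
    rw [bmLimitU_eq_getD, bmLimit_eq_getD, hrun]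
  exact hlim ▸ (hwin σu fun q => hσ _).1

section Player1

variable (σu : List (List ℕ × ℕ) → List ℕ × ℕ)

/-- Player 1 keeps one simulated play of the unfolded game against `σu` for every code `n`.
Play `n + 1` continues play `m` (with `(m, k) = Nat.unpair n`) by Player 2's move consisting of
everything played in the real game since `σu` moved in play `m`, with auxiliary number `k`;
thus every play spawns a continuation for every `k`. -/
def sim : List (List ℕ) → ℕ → List (List ℕ × ℕ)
  | _, 0 => []
  | p, n + 1 =>
    sim (p.take (2 * (Nat.unpair n).1)) (Nat.unpair n).1 ++
      [σu (sim (p.take (2 * (Nat.unpair n).1)) (Nat.unpair n).1),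
        ((p.drop (2 * (Nat.unpair n).1 + 1)).flatten, (Nat.unpair n).2)]
termination_by _ n => n
decreasing_by all_goals exact Nat.lt_succ_of_le (Nat.unpair_left_le n)

def simStrategy (p : List (List ℕ)) : List ℕ :=
  (σu (sim σu p (p.length / 2))).1

variable (τ : List (List ℕ) → List ℕ)

def simPos (n : ℕ) : List (List ℕ × ℕ) :=
  sim σu (run (simStrategy σu) τ (2 * n)) n

theorem simPos_zero : simPos σu τ 0 = [] := by
  rw [simPos, sim]

theorem simPos_succ (n : ℕ) :
    simPos σu τ (n + 1) = simPos σu τ (Nat.unpair n).1 ++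
      [σu (simPos σu τ (Nat.unpair n).1),
        (((run (simStrategy σu) τ (2 * (n + 1))).drop (2 * (Nat.unpair n).1 + 1)).flatten,
          (Nat.unpair n).2)] := by
  have hle : 2 * (Nat.unpair n).1 ≤ 2 * (n + 1) := by
    have := Nat.unpair_left_le n
    omega
  rw [simPos, sim, take_run _ _ hle, simPos]

theorem simStrategy_run (n : ℕ) :
    simStrategy σu (run (simStrategy σu) τ (2 * n)) = (σu (simPos σu τ n)).1 := by
  rw [simStrategy, length_run, Nat.mul_div_cancel_left n two_pos, simPos]

theorem flatten_map_fst_simPos (n : ℕ) :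
    ((simPos σu τ n).map Prod.fst).flatten = (run (simStrategy σu) τ (2 * n)).flatten := by
  induction n using Nat.strong_induction_on with
  | _ n ih =>
    cases n with
    | zero => rw [simPos_zero]; rfl
    | succ n =>
      set m := (Nat.unpair n).1
      have hm : m ≤ n := Nat.unpair_left_le n
      have hplay : (run (simStrategy σu) τ (2 * m)).flatten ++ (σu (simPos σu τ m)).1 =
          ((run (simStrategy σu) τ (2 * (n + 1))).take (2 * m + 1)).flatten := by
        rw [take_run _ _ (by omega), run_succ, move_of_even _ _ (by omega), simStrategy_run,
          List.flatten_append, List.flatten_singleton]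
      rw [simPos_succ]
      simp only [List.map_append, List.map_cons, List.map_nil, List.flatten_append,
        List.flatten_cons, List.flatten_nil, List.append_nil]
      rw [ih m (by omega), ← List.append_assoc, hplay, ← List.flatten_append,
        List.take_append_drop]

/-- The codes of the simulated plays in which Player 2's auxiliary numbers are `y 0, y 1, …`. -/
def codeChain (y : ℕ → ℕ) : ℕ → ℕ
  | 0 => 0
  | j + 1 => Nat.pair (codeChain y j) (y j) + 1

theorem strictMono_codeChain (y : ℕ → ℕ) : StrictMono (codeChain y) :=
  strictMono_nat_of_lt_succ fun _ => Nat.lt_succ_of_le (Nat.left_le_pair _ _)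

def chainResponder (y : ℕ → ℕ) (q : List (List ℕ × ℕ)) : List ℕ × ℕ :=
  (((run (simStrategy σu) τ (2 * codeChain y (q.length / 2 + 1))).drop
      (2 * codeChain y (q.length / 2) + 1)).flatten, y (q.length / 2))

variable (y : ℕ → ℕ)

theorem move_chainResponder_odd (j : ℕ) :
    move σu (chainResponder σu τ y) (2 * j + 1) =
      (((run (simStrategy σu) τ (2 * codeChain y (j + 1))).drop
        (2 * codeChain y j + 1)).flatten, y j) := by
  rw [move_of_odd _ _ (by omega), chainResponder, length_run,
    show (2 * j + 1) / 2 = j by omega]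

theorem run_chainResponder (j : ℕ) :
    run σu (chainResponder σu τ y) (2 * j) = simPos σu τ (codeChain y j) := by
  induction j with
  | zero => exact (simPos_zero σu τ).symm
  | succ j ih =>
    rw [show 2 * (j + 1) = 2 * j + 1 + 1 by ring, run_succ, run_succ,
      move_chainResponder_odd, move_of_even _ _ (by omega), ih, codeChain, simPos_succ,
      Nat.unpair_pair, List.append_assoc]
    rfl

theorem chainResponder_fst_ne_nil (hσu : ∀ q, (σu q).1 ≠ []) (hτ : ∀ p, τ p ≠ [])
    (q : List (List ℕ × ℕ)) : (chainResponder σu τ y q).1 ≠ [] := by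
  set j := q.length / 2
  set N := 2 * codeChain y (j + 1)
  have hlt : 2 * codeChain y j + 1 < (run (simStrategy σu) τ N).length := by
    have := strictMono_codeChain y (Nat.lt_add_one j)
    rw [length_run]
    omega
  have hmove : move (simStrategy σu) τ (2 * codeChain y j + 1) ≠ [] :=
    move_mem (s := {l : List ℕ | l ≠ []}) _ _ (fun p => hσu _) hτ _
  rw [chainResponder, List.drop_eq_getElem_cons hlt, getElem_run, List.flatten_cons]
  exact fun h => hmove (List.append_eq_nil_iff.1 h).1

theorem bmLimitU_chainResponder (hσu : ∀ q, (σu q).1 ≠ []) (hτ : ∀ p, τ p ≠ []) :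
    bmLimitU σu (chainResponder σu τ y) = bmLimit (simStrategy σu) τ := by
  funext k
  have hU : ∀ n, (move σu (chainResponder σu τ y) n).1 ≠ [] :=
    move_mem (s := {a : List ℕ × ℕ | a.1 ≠ []}) _ _ hσu
      (chainResponder_fst_ne_nil σu τ y hσu hτ)
  have hreal : ∀ n, move (simStrategy σu) τ n ≠ [] :=
    move_mem (s := {l : List ℕ | l ≠ []}) _ _ (fun p => hσu _) hτ
  have hk : k < 2 * codeChain y (k + 1) := by
    have : k + 1 ≤ codeChain y (k + 1) := (strictMono_codeChain y).id_le _
    omega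
  rw [bmLimitU_eq_getD, bmLimit_eq_getD, ← getD_flatten_map_run hU (by omega : k < 2 * (k + 1)),
    run_chainResponder, flatten_map_fst_simPos, ← List.map_id (run _ _ _),
    getD_flatten_map_run (π := id) hreal hk, List.map_id]

theorem bmAuxU_chainResponder : bmAuxU σu (chainResponder σu τ y) = y := by
  funext n
  rw [bmAuxU, bmMoveU_eq_move, move_chainResponder_odd]

end Player1

theorem p1WinsBM_of_p1WinsBMU {A : Set (ℕ → ℕ)} {B : Set ((ℕ → ℕ) × (ℕ → ℕ))}
    (hA : A ⊆ {x | ∃ y, (x, y) ∈ B}) (h : P1WinsBMU A B) : P1WinsBM A := by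
  obtain ⟨σu, hσu, hwin⟩ := h
  refine ⟨simStrategy σu, fun p => hσu _, fun τ hτ hx => ?_⟩
  obtain ⟨y, hy⟩ := hA hx
  apply hwin (chainResponder σu τ y) (chainResponder_fst_ne_nil σu τ y hσu hτ)
  rw [bmLimitU_chainResponder σu τ y hσu hτ, bmAuxU_chainResponder]
  exact ⟨hx, hy⟩

/-- Banach–Mazur unfolding: if `A` is the projection of `B`,
then a winning strategy for either player in the unfolded game `G*_{A,B}`
yields a winning strategy for the same player in `G*_A`. -/
theorem banach_mazur_unfolding (A : Set (ℕ → ℕ)) (B : Set ((ℕ → ℕ) × (ℕ → ℕ)))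
    (hAB : A = {x | ∃ y, (x, y) ∈ B}) :
    (P2WinsBMU A B → P2WinsBM A) ∧ (P1WinsBMU A B → P1WinsBM A) :=
  ⟨p2WinsBM_of_p2WinsBMU, p1WinsBM_of_p1WinsBMU hAB.subset⟩
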